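/- arXiv:math/0410171 — 3 statements merged into one kernel-verified Lean document; each statement's English description precedes it below -/
import Mathlib

section
/- For the VRRW on ℤ and any x ∈ ℤ, almost surely on Υ(x) the limit β⁻_∞(x+2) := lim_n Z_n(x+1)/Z_n(x+2) exists in [0, ∞), and on Υ(x) ∩ {Z_∞(x+2) = ∞} one has β⁻_∞(x+2) = α⁻_∞(x+2). -/
open MeasureTheory Filter

/-- `Znum X n v ω` is `1` plus the number of visits of the walk `X` to the site
`v` up through time `n` (the quantity `Z_n(v)` of the paper), as a real number. -/
noncomputable def Znum {Ω : Type*} (X : ℕ → Ω → ℤ) (n : ℕ) (v : ℤ) (ω : Ω) : ℝ :=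
  1 + ∑ i ∈ Finset.range (n + 1), if X i ω = v then (1 : ℝ) else 0

/-- `Y_n(x)`: weighted number of visits to `x` up to time `n`. -/
noncomputable def Ynum {Ω : Type*} (X : ℕ → Ω → ℤ) (n : ℕ) (x : ℤ) (ω : Ω) : ℝ :=
  ∑ k ∈ Finset.Icc 1 n,
    (if X (k - 1) ω = x then (1 : ℝ) else 0) /
      (Znum X (k - 1) (x - 1) ω + Znum X (k - 1) (x + 1) ω)

/-- `Y⁺_n(x)`: weighted number of crossings from `x` to `x+1` up to time `n`. -/
noncomputable def Yplus {Ω : Type*} (X : ℕ → Ω → ℤ) (n : ℕ) (x : ℤ) (ω : Ω) : ℝ :=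
  ∑ k ∈ Finset.Icc 1 n,
    (if X (k - 1) ω = x ∧ X k ω = x + 1 then (1 : ℝ) else 0) / Znum X (k - 1) (x + 1) ω

/-- `Y⁻_n(x)`: weighted number of crossings from `x` to `x-1` up to time `n`. -/
noncomputable def Yminus {Ω : Type*} (X : ℕ → Ω → ℤ) (n : ℕ) (x : ℤ) (ω : Ω) : ℝ :=
  ∑ k ∈ Finset.Icc 1 n,
    (if X (k - 1) ω = x ∧ X k ω = x - 1 then (1 : ℝ) else 0) / Znum X (k - 1) (x - 1) ω

/-- The event `Υ(x) = {Y_∞(x) < ∞}` (the sums `Y_n(x)` are nondecreasing in `n`,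
so finiteness of the limit is boundedness). -/
def Upsilon {Ω : Type*} (X : ℕ → Ω → ℤ) (x : ℤ) : Set Ω :=
  {ω | BddAbove (Set.range fun n => Ynum X n x ω)}

/-- The event `Υ⁺(x) = {Y⁺_∞(x) < ∞}`. -/
def UpsilonPlus {Ω : Type*} (X : ℕ → Ω → ℤ) (x : ℤ) : Set Ω :=
  {ω | BddAbove (Set.range fun n => Yplus X n x ω)}

/-- The event `Υ⁻(x) = {Y⁻_∞(x) < ∞}`. -/
def UpsilonMinus {Ω : Type*} (X : ℕ → Ω → ℤ) (x : ℤ) : Set Ω :=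
  {ω | BddAbove (Set.range fun n => Yminus X n x ω)}

/-- `α⁻_n(y) = Z_n(y-1)/(Z_n(y-1) + Z_n(y+1))`. -/
noncomputable def alphaMinus {Ω : Type*} (X : ℕ → Ω → ℤ) (n : ℕ) (y : ℤ) (ω : Ω) : ℝ :=
  Znum X n (y - 1) ω / (Znum X n (y - 1) ω + Znum X n (y + 1) ω)

/-- `(X_n)` is a vertex-reinforced random walk on `ℤ` started at `v0`:
it is adapted, starts at `v0`, a.s. makes nearest-neighbor steps, and the
conditional law of each step is proportional to the augmented occupations of
the two neighbors. -/
structure IsVRRW {Ω : Type*} {m0 : MeasurableSpace Ω} (μ : Measure Ω)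
    (ℱ : Filtration ℕ m0) (X : ℕ → Ω → ℤ) (v0 : ℤ) : Prop where
  adapted : Adapted ℱ X
  init : ∀ ω, X 0 ω = v0
  nearest : ∀ n, ∀ᵐ ω ∂μ, X (n + 1) ω = X n ω + 1 ∨ X (n + 1) ω = X n ω - 1
  step : ∀ n, ∀ᵐ ω ∂μ, ∀ x : ℤ,
    (μ[Set.indicator {ω' | X (n + 1) ω' = x} (fun _ => (1 : ℝ)) | ℱ n]) ω =
      if x = X n ω + 1 ∨ x = X n ω - 1 then
        Znum X n x ω / (Znum X n (X n ω - 1) ω + Znum X n (X n ω + 1) ω)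
      else 0

/-!
For `z = y ± 1`, `Y^{y→z}_n - Y_n(y)` is a martingale whose increments are square-summable along
every path (the `j`-th crossing into `z` weighs at most `1 / j`), so it converges a.s.

Since `∑_{k ≤ n} 1_{X_k = v} / Z_k(v)` is the harmonic number `H_{Z_n(v)}`, it differs from
`ln Z_n(v)` by a convergent sequence. Every visit to `x + 1` after time `0` is a crossing from `x`
or from `x + 2`, so on `Υ(x)`, where `Y⁺_n(x)` converges too, `ln β⁻_n(x+2)` is `-W_n` plus a
convergent sequence, with `W_n = ∑_{k < n} 1_{X_k = x+2} (1 / Z_k(x+2) - 1 / (Z_k(x+1) + Z_k(x+3)))`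
nondecreasing because `Z(x+2) ≤ Z(x+1) + Z(x+3)`. If `W_n → ∞`, then `β⁻_n(x+2) → 0`, and so does
`α⁻_n(x+2) ≤ β⁻_n(x+2)`. Otherwise `β⁻_n(x+2)` has a positive limit, and if `x + 2` is visited
infinitely often, the convergence of `W` forces `α⁻/β⁻ = Z(x+2) / (Z(x+1) + Z(x+3)) → 1`, because
the excess `Z(x+1) + Z(x+3) - Z(x+2)` is nondecreasing along the visits to `x + 2`.
-/

open Finset Topology

namespace MeasureTheory.Martingale

variable {Ω : Type*} {m0 : MeasurableSpace Ω} {μ : Measure Ω} [IsFiniteMeasure μ]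
  {ℱ : Filtration ℕ m0} {f : ℕ → Ω → ℝ}

theorem integral_sq_succ (hf : Martingale f ℱ μ) (hL2 : ∀ n, MemLp (f n) 2 μ) (n : ℕ) :
    ∫ ω, f (n + 1) ω ^ 2 ∂μ = ∫ ω, f n ω ^ 2 ∂μ + ∫ ω, (f (n + 1) ω - f n ω) ^ 2 ∂μ := by
  have hmul : Integrable (f n * f (n + 1)) μ := (hL2 n).integrable_mul (hL2 (n + 1))
  have hcross : ∫ ω, f n ω * f (n + 1) ω ∂μ = ∫ ω, f n ω ^ 2 ∂μ := by
    have hcond : μ[f n * f (n + 1) | ℱ n] =ᵐ[μ] f n * f n :=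
      (condExp_mul_of_stronglyMeasurable_left (hf.stronglyAdapted n) hmul
        ((hL2 (n + 1)).integrable one_le_two)).trans
        ((hf.condExp_ae_eq n.le_succ).mono fun ω h => by simp [h])
    rw [← integral_condExp (ℱ.le n)]
    exact integral_congr_ae (hcond.mono fun ω h => h.trans (sq (f n ω)).symm)
  have hsq : ∀ k, Integrable (fun ω => f k ω ^ 2) μ := fun k => (hL2 k).integrable_sq
  have hadd : Integrable (fun ω => f (n + 1) ω ^ 2 + f n ω ^ 2) μ := (hsq _).add (hsq n)
  have hmul2 : Integrable (fun ω => 2 * (f n ω * f (n + 1) ω)) μ := hmul.const_mul 2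
  have hexp : ∫ ω, (f (n + 1) ω - f n ω) ^ 2 ∂μ
      = ∫ ω, (f (n + 1) ω ^ 2 + f n ω ^ 2 - 2 * (f n ω * f (n + 1) ω)) ∂μ :=
    integral_congr_ae (ae_of_all _ fun ω => by ring)
  rw [hexp, integral_sub hadd hmul2, integral_add (hsq _) (hsq n), integral_const_mul, hcross]
  ring

theorem integral_sq_le_of_sum_sq_le (hf : Martingale f ℱ μ) (hL2 : ∀ n, MemLp (f n) 2 μ)
    {C : ℝ} (hC : ∀ᵐ ω ∂μ, ∀ n, ∑ k ∈ range n, (f (k + 1) ω - f k ω) ^ 2 ≤ C) (n : ℕ) :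
    ∫ ω, f n ω ^ 2 ∂μ ≤ ∫ ω, f 0 ω ^ 2 ∂μ + μ.real Set.univ * C := by
  have hinc : ∀ k, Integrable (fun ω => (f (k + 1) ω - f k ω) ^ 2) μ :=
    fun k => ((hL2 (k + 1)).sub (hL2 k)).integrable_sq
  have hsum : ∫ ω, f n ω ^ 2 ∂μ
      = ∫ ω, f 0 ω ^ 2 ∂μ + ∫ ω, ∑ k ∈ range n, (f (k + 1) ω - f k ω) ^ 2 ∂μ := by
    rw [integral_finsetSum _ fun k _ => hinc k]
    induction n with
    | zero => simp
    | succ n ih => rw [hf.integral_sq_succ hL2, ih, sum_range_succ, add_assoc]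
  have hbound : ∫ ω, ∑ k ∈ range n, (f (k + 1) ω - f k ω) ^ 2 ∂μ ≤ ∫ _, C ∂μ :=
    integral_mono_ae (integrable_finsetSum _ fun k _ => hinc k) (integrable_const C)
      (hC.mono fun ω h => h n)
  rw [integral_const, smul_eq_mul] at hbound
  linarith

theorem ae_exists_tendsto_of_sum_sq_le (hf : Martingale f ℱ μ) (hL2 : ∀ n, MemLp (f n) 2 μ)
    {C : ℝ} (hC : ∀ᵐ ω ∂μ, ∀ n, ∑ k ∈ range n, (f (k + 1) ω - f k ω) ^ 2 ≤ C) :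
    ∀ᵐ ω ∂μ, ∃ c, Tendsto (fun n => f n ω) atTop (𝓝 c) := by
  set R : ℝ := μ.real Set.univ + ∫ ω, f 0 ω ^ 2 ∂μ + μ.real Set.univ * C
  refine hf.submartingale.exists_ae_tendsto_of_bdd (R := R.toNNReal) fun n => ?_
  have hint := (hL2 n).integrable one_le_two
  have hle : ∀ ω, ‖f n ω‖ ≤ 1 + f n ω ^ 2 := fun ω => by
    rw [Real.norm_eq_abs]
    nlinarith [abs_nonneg (f n ω), sq_abs (f n ω)]
  have hl1 : ∫ ω, ‖f n ω‖ ∂μ ≤ R := by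
    calc ∫ ω, ‖f n ω‖ ∂μ ≤ ∫ ω, (1 + f n ω ^ 2) ∂μ :=
          integral_mono hint.norm ((integrable_const 1).add (hL2 n).integrable_sq) hle
      _ ≤ R := by
        rw [integral_add (integrable_const 1) (hL2 n).integrable_sq, integral_const, smul_eq_mul,
          mul_one]
        linarith [hf.integral_sq_le_of_sum_sq_le hL2 hC n]
  rw [eLpNorm_one_eq_lintegral_enorm, ← ofReal_integral_norm_eq_lintegral_enorm hint]
  exact ENNReal.ofReal_le_ofReal hl1

end MeasureTheory.Martingale

section Counting

variable (p : ℕ → Prop) [DecidablePred p]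

lemma harmonic_count_add_one (n : ℕ) : (harmonic (Nat.count p n + 1) : ℝ) =
    1 + ∑ k ∈ range n, (if p k then 1 else 0) / ((Nat.count p (k + 1) : ℝ) + 1) := by
  induction n with
  | zero => simp
  | succ n ih =>
    rw [sum_range_succ, ← add_assoc, ← ih, Nat.count_succ]
    split_ifs <;> simp [harmonic_succ]

/-- Telescoping: `1 / j ^ 2 ≤ 2 / j - 2 / (j + 1)`. -/
lemma sum_div_sq_count_le_two (n : ℕ) :
    ∑ k ∈ range n, (if p k then 1 else 0) / ((Nat.count p k : ℝ) + 1) ^ 2 ≤ 2 := by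
  have hstep : ∀ k, (if p k then 1 else 0) / ((Nat.count p k : ℝ) + 1) ^ 2
      ≤ 2 / ((Nat.count p k : ℝ) + 1) - 2 / ((Nat.count p (k + 1) : ℝ) + 1) := fun k => by
    rw [Nat.count_succ]
    have hc : (0 : ℝ) ≤ Nat.count p k := Nat.cast_nonneg _
    split_ifs
    · push_cast
      rw [div_sub_div _ _ (by positivity) (by positivity),
        div_le_div_iff₀ (by positivity) (by positivity)]
      nlinarith
    · simp
  calc _ ≤ ∑ k ∈ range n,
        (2 / ((Nat.count p k : ℝ) + 1) - 2 / ((Nat.count p (k + 1) : ℝ) + 1)) :=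
        sum_le_sum fun k _ => hstep k
    _ ≤ 2 := by
      rw [sum_range_sub' (fun k => 2 / ((Nat.count p k : ℝ) + 1))]
      simp only [Nat.count_zero, CharP.cast_eq_zero, zero_add, div_one]
      linarith [show 0 ≤ 2 / ((Nat.count p n : ℝ) + 1) by positivity]

end Counting

lemma tendsto_count_atTop {p : ℕ → Prop} [DecidablePred p] (hp : {k | p k}.Infinite) :
    Tendsto (Nat.count p) atTop atTop :=
  tendsto_atTop_atTop_of_monotone (Nat.count_monotone p) fun b => ⟨Nat.nth p b + 1, by
    rw [Nat.count_succ, Nat.count_nth_of_infinite hp, if_pos (Nat.nth_mem_of_infinite hp b)]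
    omega⟩

lemma exists_tendsto_comp_of_monotone {f : ℕ → ℝ} {c : ℝ} (hf : Tendsto f atTop (𝓝 c))
    {m : ℕ → ℕ} (hm : Monotone m) : ∃ l, Tendsto (fun n => f (m n)) atTop (𝓝 l) := by
  rcases tendsto_atTop_of_monotone hm with h | ⟨l, hl⟩
  · exact ⟨c, hf.comp h⟩
  · exact ⟨f l, ((continuous_of_discreteTopology (f := f)).tendsto l).comp hl⟩

/-- On the block `[M, 2M + 2)` every term is at least `E M / (4 (M + 2) (M + 2 + E M))`, so the
block sums, which tend to `0`, dominate `E M / (4 (M + 2 + E M))`. -/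
lemma tendsto_div_add_of_monotone_of_sum_le {E : ℕ → ℝ} (hE0 : ∀ m, 0 ≤ E m) (hE : Monotone E)
    {B : ℝ} (hB : ∀ M, ∑ m ∈ range M, E m / ((m + 2) * (m + 2 + E m)) ≤ B) :
    Tendsto (fun m => E m / (m + 2 + E m)) atTop (𝓝 0) := by
  set g : ℕ → ℝ := fun m => E m / ((m + 2) * (m + 2 + E m))
  have hg0 : ∀ m, 0 ≤ g m := fun m => div_nonneg (hE0 m) (by have := hE0 m; positivity)
  have hS := (summable_of_sum_range_le hg0 hB).hasSum.tendsto_sum_nat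
  have hblock : Tendsto (fun M => ∑ m ∈ Ico M (2 * M + 2), g m) atTop (𝓝 0) := by
    have h2 : Tendsto (fun M : ℕ => 2 * M + 2) atTop atTop :=
      tendsto_atTop_mono (fun M => (by omega : M ≤ 2 * M + 2)) tendsto_id
    have h := (hS.comp h2).sub hS
    rw [sub_self] at h
    exact h.congr fun M => (sum_Ico_eq_sub g (by omega : M ≤ 2 * M + 2)).symm
  refine squeeze_zero (fun M => div_nonneg (hE0 M) (by have := hE0 M; positivity)) (fun M => ?_)
    (by simpa using hblock.const_mul 4)
  have hlow : ∀ m ∈ Ico M (2 * M + 2), E M / (4 * ((M + 2) * (M + 2 + E M))) ≤ g m := by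
    intro m hm
    rw [mem_Ico] at hm
    have hmM : (m : ℝ) + 2 ≤ 2 * ((M : ℝ) + 2) := by
      have : (m : ℝ) ≤ 2 * M + 1 := by exact_mod_cast (by omega : m ≤ 2 * M + 1)
      linarith
    have hEm := hE hm.1
    have := hE0 M
    have := hE0 m
    rw [div_le_div_iff₀ (by positivity) (by positivity)]
    calc E M * ((m + 2) * (m + 2 + E m)) = (m + 2) * (E M * (m + 2) + E M * E m) := by ring
      _ ≤ (m + 2) * (E m * (m + 2) + E M * E m) := by gcongr
      _ = E m * ((m + 2) * (m + 2 + E M)) := by ring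
      _ ≤ E m * ((2 * (M + 2)) * (2 * (M + 2 + E M))) := by
        gcongr
        linarith
      _ = E m * (4 * ((M + 2) * (M + 2 + E M))) := by ring
  have hsum := card_nsmul_le_sum _ _ _ hlow
  rw [Nat.card_Ico, nsmul_eq_mul, show 2 * M + 2 - M = M + 2 by omega] at hsum
  have := hE0 M
  calc E M / (M + 2 + E M)
      = 4 * (((M + 2 : ℕ) : ℝ) * (E M / (4 * ((M + 2) * (M + 2 + E M))))) := by
        push_cast
        field_simp
    _ ≤ 4 * ∑ m ∈ Ico M (2 * M + 2), g m := by gcongr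

lemma sq_div_le_div_sq {a D E : ℝ} (ha0 : 0 ≤ a) (ha1 : a ≤ 1) (hE : 0 < E) (hED : E ≤ D) :
    (a / D) ^ 2 ≤ a / E ^ 2 := by
  rw [div_pow]
  calc a ^ 2 / D ^ 2 ≤ a / D ^ 2 := by gcongr; nlinarith
    _ ≤ a / E ^ 2 := by gcongr

namespace VRRW

variable {Ω : Type*} {X : ℕ → Ω → ℤ} {ω : Ω} {k n : ℕ} {u v w y z : ℤ}

noncomputable def visit (X : ℕ → Ω → ℤ) (k : ℕ) (v : ℤ) (ω : Ω) : ℝ :=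
  if X k ω = v then 1 else 0

noncomputable def crossing (X : ℕ → Ω → ℤ) (k : ℕ) (y z : ℤ) (ω : Ω) : ℝ :=
  if X k ω = y ∧ X (k + 1) ω = z then 1 else 0

/-- `Y^{y→z}_n`, so that `Y⁺_n(x) = Ycross X x (x + 1) n` and `Y⁻_n(x) = Ycross X x (x - 1) n`. -/
noncomputable def Ycross (X : ℕ → Ω → ℤ) (y z : ℤ) (n : ℕ) (ω : Ω) : ℝ :=
  ∑ k ∈ range n, crossing X k y z ω / Znum X k z ω

def NearestNeighbor (X : ℕ → Ω → ℤ) (ω : Ω) : Prop :=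
  ∀ n, X (n + 1) ω = X n ω + 1 ∨ X (n + 1) ω = X n ω - 1

lemma visit_nonneg : 0 ≤ visit X k v ω := by unfold visit; split_ifs <;> norm_num

lemma visit_le_one : visit X k v ω ≤ 1 := by unfold visit; split_ifs <;> norm_num

lemma crossing_nonneg : 0 ≤ crossing X k y z ω := by unfold crossing; split_ifs <;> norm_num

lemma crossing_le_one : crossing X k y z ω ≤ 1 := by unfold crossing; split_ifs <;> norm_num

lemma crossing_le_visit_succ : crossing X k y z ω ≤ visit X (k + 1) z ω := by
  unfold crossing visit; split_ifs <;> simp_all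

lemma crossing_eq_visit_mul : crossing X k y z ω = visit X k y ω * visit X (k + 1) z ω := by
  unfold crossing visit; split_ifs <;> simp_all

lemma Znum_eq_count (n : ℕ) (v : ℤ) :
    Znum X n v ω = Nat.count (fun i => X i ω = v) (n + 1) + 1 := by
  rw [Znum, Nat.count_eq_card_filter_range, ← sum_boole, add_comm]

lemma Znum_succ (n : ℕ) (v : ℤ) : Znum X (n + 1) v ω = Znum X n v ω + visit X (n + 1) v ω := by
  rw [Znum, Znum, sum_range_succ, add_assoc]
  rfl

lemma one_le_Znum : 1 ≤ Znum X n v ω := by rw [Znum_eq_count]; simp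

lemma Znum_pos : 0 < Znum X n v ω := one_pos.trans_le one_le_Znum

lemma one_le_Znum_add_Znum : 1 ≤ Znum X n u ω + Znum X n w ω :=
  one_le_Znum.trans (le_add_of_nonneg_right Znum_pos.le)

lemma monotone_Znum (v : ℤ) : Monotone fun n => Znum X n v ω :=
  monotone_nat_of_le_succ fun n => by
    rw [Znum_succ]
    exact le_add_of_nonneg_right visit_nonneg

lemma crossing_div_Znum_nonneg : 0 ≤ crossing X k y z ω / Znum X k z ω :=
  div_nonneg crossing_nonneg Znum_pos.le

lemma crossing_div_Znum_le_one : crossing X k y z ω / Znum X k z ω ≤ 1 :=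
  div_le_one_of_le₀ (crossing_le_one.trans one_le_Znum) Znum_pos.le

lemma visit_div_neighbors_nonneg :
    0 ≤ visit X k y ω / (Znum X k (y - 1) ω + Znum X k (y + 1) ω) :=
  div_nonneg visit_nonneg (add_pos Znum_pos Znum_pos).le

lemma visit_div_neighbors_le_one :
    visit X k y ω / (Znum X k (y - 1) ω + Znum X k (y + 1) ω) ≤ 1 :=
  div_le_one_of_le₀ (visit_le_one.trans one_le_Znum_add_Znum) (add_pos Znum_pos Znum_pos).le

lemma Ynum_eq_sum_range (n : ℕ) (y : ℤ) : Ynum X n y ω =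
    ∑ k ∈ range n, visit X k y ω / (Znum X k (y - 1) ω + Znum X k (y + 1) ω) := by
  induction n with
  | zero => simp [Ynum]
  | succ n ih =>
    rw [Ynum, sum_Icc_succ_top (by omega), ← Ynum, ih, sum_range_succ]
    rfl

lemma alphaMinus_eq_mul (n : ℕ) (v : ℤ) : alphaMinus X n v ω = Znum X n (v - 1) ω / Znum X n v ω
    * (Znum X n v ω / (Znum X n (v - 1) ω + Znum X n (v + 1) ω)) := by
  rw [alphaMinus, div_mul_div_comm, mul_comm (Znum X n (v - 1) ω),
    mul_div_mul_left _ _ Znum_pos.ne']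

section Path

lemma visit_succ_eq_crossing_add (hX : NearestNeighbor X ω) (k : ℕ) (v : ℤ) :
    visit X (k + 1) v ω = crossing X k (v - 1) v ω + crossing X k (v + 1) v ω := by
  unfold visit crossing
  by_cases hv : X (k + 1) ω = v
  · rcases hX k with h | h
    · rw [if_pos hv, if_pos ⟨by omega, hv⟩, if_neg (by omega)]
      norm_num
    · rw [if_pos hv, if_neg (by omega), if_pos ⟨by omega, hv⟩]
      norm_num
  · simp [hv]

/-- A step out of `v` lands on a neighbour of `v`. -/
lemma monotone_neighbors_sub_Znum_add_visit (hX : NearestNeighbor X ω) (v : ℤ) :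
    Monotone fun n => Znum X n (v - 1) ω + Znum X n (v + 1) ω - Znum X n v ω + visit X n v ω := by
  refine monotone_nat_of_le_succ fun n => ?_
  have hstep : visit X n v ω ≤ visit X (n + 1) (v - 1) ω + visit X (n + 1) (v + 1) ω := by
    unfold visit
    by_cases hv : X n ω = v
    · rcases hX n with h | h
      · rw [if_pos hv, if_pos (by omega : X (n + 1) ω = v + 1)]
        split_ifs <;> norm_num
      · rw [if_pos hv, if_pos (by omega : X (n + 1) ω = v - 1)]
        split_ifs <;> norm_num
    · rw [if_neg hv]
      split_ifs <;> norm_num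
  simp only [Znum_succ]
  linarith

lemma Znum_le_neighbors (hX : NearestNeighbor X ω) (n : ℕ) (v : ℤ) :
    Znum X n v ω ≤ Znum X n (v - 1) ω + Znum X n (v + 1) ω := by
  have h := monotone_neighbors_sub_Znum_add_visit hX v (Nat.zero_le n)
  have h0 : ∀ w, Znum X 0 w ω = 1 + visit X 0 w ω := fun w => by
    rw [Znum, zero_add, sum_range_one]
    rfl
  have h1 : 0 ≤ visit X 0 (v - 1) ω := visit_nonneg
  have h2 : 0 ≤ visit X 0 (v + 1) ω := visit_nonneg
  have h3 : visit X n v ω ≤ 1 := visit_le_one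
  simp only [h0] at h
  linarith

lemma alphaMinus_le (hX : NearestNeighbor X ω) (n : ℕ) (v : ℤ) :
    alphaMinus X n v ω ≤ Znum X n (v - 1) ω / Znum X n v ω := by
  rw [alphaMinus_eq_mul]
  exact mul_le_of_le_one_right (div_nonneg Znum_pos.le Znum_pos.le)
    (div_le_one_of_le₀ (Znum_le_neighbors hX n v) (add_pos Znum_pos Znum_pos).le)

end Path

section Limits

lemma tendsto_Znum_atTop (hv : {k | X k ω = v}.Infinite) :
    Tendsto (fun n => Znum X n v ω) atTop atTop := by
  simp only [Znum_eq_count]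
  exact tendsto_atTop_add_const_right _ _ (tendsto_natCast_atTop_atTop.comp
    ((tendsto_count_atTop hv).comp (tendsto_add_atTop_nat 1)))

lemma infinite_setOf_of_not_bddAbove (h : ¬ BddAbove (Set.range fun n => Znum X n v ω)) :
    {k | X k ω = v}.Infinite := by
  refine fun hfin => h ⟨hfin.toFinset.card + 1, ?_⟩
  rintro _ ⟨n, rfl⟩
  show Znum X n v ω ≤ _
  rw [Znum_eq_count]
  exact_mod_cast Nat.add_le_add_right (Nat.count_le_card hfin _) 1

lemma tendsto_visit_div_Znum (v : ℤ) :
    Tendsto (fun n => visit X n v ω / Znum X n v ω) atTop (𝓝 0) := by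
  by_cases hv : {k | X k ω = v}.Infinite
  · refine squeeze_zero (fun n => div_nonneg visit_nonneg Znum_pos.le) (fun n => ?_)
      (tendsto_Znum_atTop hv).inv_tendsto_atTop
    exact div_le_div_of_nonneg_right visit_le_one Znum_pos.le |>.trans_eq (one_div _)
  · have hev := (Set.not_infinite.1 hv).eventually_cofinite_notMem
    rw [Nat.cofinite_eq_atTop] at hev
    refine tendsto_const_nhds.congr' (hev.mono fun n hn => ?_)
    simp [visit, show ¬ X n ω = v from hn]

lemma exists_tendsto_log_Znum_sub_sum (v : ℤ) : ∃ c, Tendsto (fun n =>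
    Real.log (Znum X n v ω) - ∑ k ∈ range (n + 1), visit X k v ω / Znum X k v ω) atTop (𝓝 c) := by
  set p : ℕ → Prop := fun i => X i ω = v
  have hsum : ∀ n, ∑ k ∈ range n, visit X k v ω / Znum X k v ω
      = (harmonic (Nat.count p n + 1) : ℝ) - 1 := fun n => by
    rw [harmonic_count_add_one]
    simp only [Znum_eq_count, visit, p, add_sub_cancel_left]
  have hm : Monotone fun n => Nat.count p (n + 1) + 1 := fun a b hab =>
    Nat.add_le_add_right (Nat.count_monotone p (Nat.add_le_add_right hab 1)) 1
  obtain ⟨l, hl⟩ := exists_tendsto_comp_of_monotone Real.tendsto_harmonic_sub_log hm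
  refine ⟨1 - l, (tendsto_const_nhds.sub hl).congr fun n => ?_⟩
  rw [hsum, Znum_eq_count]
  push_cast
  ring

lemma monotone_Ycross (y z : ℤ) : Monotone fun n => Ycross X y z n ω :=
  monotone_nat_of_le_succ fun n => by
    rw [Ycross, Ycross, sum_range_succ]
    exact le_add_of_nonneg_right (div_nonneg crossing_nonneg Znum_pos.le)

/-- The difference is at most the telescoping sum `∑_k (1 / Z_k(z) - 1 / Z_{k+1}(z)) ≤ 1`. -/
lemma exists_tendsto_Ycross_sub (y z : ℤ) : ∃ c, Tendsto (fun n => Ycross X y z n ω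
    - ∑ k ∈ range n, crossing X k y z ω / Znum X (k + 1) z ω) atTop (𝓝 c) := by
  set gap : ℕ → ℝ := fun k => 1 / Znum X k z ω - 1 / Znum X (k + 1) z ω
  have hgap : ∀ k, 0 ≤ gap k := fun k =>
    sub_nonneg.2 (one_div_le_one_div_of_le Znum_pos (monotone_Znum z k.le_succ))
  have hbdd : ∀ n, ∑ k ∈ range n, crossing X k y z ω * gap k ≤ 1 := fun n => by
    have h0 : 1 / Znum X 0 z ω ≤ 1 := div_le_one_of_le₀ one_le_Znum Znum_pos.le
    have hn : 0 ≤ 1 / Znum X n z ω := one_div_nonneg.2 Znum_pos.le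
    calc _ ≤ ∑ k ∈ range n, gap k :=
          sum_le_sum fun k _ => mul_le_of_le_one_left (hgap k) crossing_le_one
      _ ≤ 1 := by
        rw [sum_range_sub' (fun k => 1 / Znum X k z ω)]
        linarith
  obtain ⟨l, hl⟩ :
      ∃ l, Tendsto (fun n => ∑ k ∈ range n, crossing X k y z ω * gap k) atTop (𝓝 l) :=
    ⟨_, (summable_of_sum_range_le (fun k => mul_nonneg crossing_nonneg (hgap k))
      hbdd).hasSum.tendsto_sum_nat⟩
  refine ⟨l, hl.congr fun n => ?_⟩
  rw [Ycross, ← sum_sub_distrib]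
  exact sum_congr rfl fun k _ => by ring

end Limits

section Drift

/-- `drift X v n = -∑_{k < n} 1_{X_k = v} (α⁻_k(v) / β⁻_k(v) - 1) / Z_k(v)`, the drift of
`ln β⁻_n(v)`. -/
noncomputable def drift (X : ℕ → Ω → ℤ) (v : ℤ) (n : ℕ) (ω : Ω) : ℝ :=
  ∑ k ∈ range n,
    visit X k v ω * (1 / Znum X k v ω - 1 / (Znum X k (v - 1) ω + Znum X k (v + 1) ω))

lemma drift_term_nonneg (hX : NearestNeighbor X ω) (k : ℕ) (v : ℤ) :
    0 ≤ visit X k v ω * (1 / Znum X k v ω - 1 / (Znum X k (v - 1) ω + Znum X k (v + 1) ω)) :=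
  mul_nonneg visit_nonneg
    (sub_nonneg.2 (one_div_le_one_div_of_le Znum_pos (Znum_le_neighbors hX k v)))

lemma monotone_drift (hX : NearestNeighbor X ω) (v : ℤ) : Monotone fun n => drift X v n ω :=
  monotone_nat_of_le_succ fun n => by
    rw [drift, drift, sum_range_succ]
    exact le_add_of_nonneg_right (drift_term_nonneg hX n v)

lemma sum_visit_div_Znum_eq_drift_add_Ynum (v : ℤ) (n : ℕ) :
    ∑ k ∈ range n, visit X k v ω / Znum X k v ω = drift X v n ω + Ynum X n v ω := by
  rw [drift, Ynum_eq_sum_range, ← sum_add_distrib]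
  exact sum_congr rfl fun k _ => by ring

lemma sum_visit_div_Znum_eq_crossings (hX : NearestNeighbor X ω) (v : ℤ) (n : ℕ) :
    ∑ k ∈ range (n + 1), visit X k v ω / Znum X k v ω = visit X 0 v ω / Znum X 0 v ω
      + ∑ k ∈ range n, crossing X k (v - 1) v ω / Znum X (k + 1) v ω
      + ∑ k ∈ range n, crossing X k (v + 1) v ω / Znum X (k + 1) v ω := by
  rw [sum_range_succ', add_comm, add_assoc, ← sum_add_distrib]
  simp only [visit_succ_eq_crossing_add hX, add_div]

lemma exists_tendsto_log_betaMinus_add_drift (hX : NearestNeighbor X ω) (x : ℤ)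
    (hplus : ∃ c, Tendsto (fun n => Ycross X x (x + 1) n ω - Ynum X n x ω) atTop (𝓝 c))
    (hminus : ∃ c,
      Tendsto (fun n => Ycross X (x + 2) (x + 1) n ω - Ynum X n (x + 2) ω) atTop (𝓝 c))
    (hΥ : ω ∈ Upsilon X x) : ∃ L, Tendsto (fun n =>
      Real.log (Znum X n (x + 1) ω / Znum X n (x + 2) ω) + drift X (x + 2) n ω) atTop (𝓝 L) := by
  obtain ⟨c₁, h₁⟩ : ∃ c, Tendsto (fun n => Ycross X x (x + 1) n ω) atTop (𝓝 c) := by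
    obtain ⟨c, hc⟩ := hplus
    obtain ⟨B, hB⟩ := hc.bddAbove_range
    obtain ⟨C, hC⟩ := hΥ
    refine ⟨_, tendsto_atTop_ciSup (monotone_Ycross x (x + 1)) ⟨B + C, ?_⟩⟩
    rintro _ ⟨n, rfl⟩
    linarith [hB ⟨n, rfl⟩, hC ⟨n, rfl⟩]
  obtain ⟨c₂, h₂⟩ := hminus
  obtain ⟨c₃, h₃⟩ := exists_tendsto_Ycross_sub (X := X) (ω := ω) x (x + 1)
  obtain ⟨c₄, h₄⟩ := exists_tendsto_Ycross_sub (X := X) (ω := ω) (x + 2) (x + 1)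
  obtain ⟨c₅, h₅⟩ := exists_tendsto_log_Znum_sub_sum (X := X) (ω := ω) (x + 1)
  obtain ⟨c₆, h₆⟩ := exists_tendsto_log_Znum_sub_sum (X := X) (ω := ω) (x + 2)
  have h₇ := tendsto_visit_div_Znum (X := X) (ω := ω) (x + 2)
  refine ⟨_, ((((((h₅.sub h₆).add h₁).add h₂).sub h₃).sub h₄).sub h₇).add_const
    (visit X 0 (x + 1) ω / Znum X 0 (x + 1) ω) |>.congr fun n => ?_⟩
  have hcross := sum_visit_div_Znum_eq_crossings hX (x + 1) n
  rw [show x + 1 - 1 = x by ring, show x + 1 + 1 = x + 2 by ring] at hcross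
  have hdrift := sum_visit_div_Znum_eq_drift_add_Ynum (X := X) (ω := ω) (x + 2) n
  rw [Real.log_div Znum_pos.ne' Znum_pos.ne', hcross, sum_range_succ, hdrift]
  ring

end Drift

section Ratio

/-- The excess `Z(v - 1) + Z(v + 1) - Z(v)` at the `m`-th visit to `v` (counted from `0`), where
`Z(v) = m + 2`. -/
noncomputable def excessAtVisit (X : ℕ → Ω → ℤ) (v : ℤ) (m : ℕ) (ω : Ω) : ℝ :=
  Znum X (Nat.nth (fun k => X k ω = v) m) (v - 1) ω
    + Znum X (Nat.nth (fun k => X k ω = v) m) (v + 1) ω - (m + 2)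

lemma Znum_nth (hv : {k | X k ω = v}.Infinite) (m : ℕ) :
    Znum X (Nat.nth (fun k => X k ω = v) m) v ω = m + 2 := by
  rw [Znum_eq_count, Nat.count_succ, Nat.count_nth_of_infinite hv,
    if_pos (Nat.nth_mem_of_infinite hv m)]
  push_cast
  ring

lemma excessAtVisit_nonneg (hX : NearestNeighbor X ω) (hv : {k | X k ω = v}.Infinite) (m : ℕ) :
    0 ≤ excessAtVisit X v m ω := by
  have := Znum_le_neighbors hX (Nat.nth (fun k => X k ω = v) m) v
  rw [Znum_nth hv] at this
  rw [excessAtVisit]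
  linarith

lemma monotone_excessAtVisit (hX : NearestNeighbor X ω) (hv : {k | X k ω = v}.Infinite) :
    Monotone fun m => excessAtVisit X v m ω := fun a b hab => by
  have := monotone_neighbors_sub_Znum_add_visit hX v ((Nat.nth_strictMono hv).monotone hab)
  beta_reduce at this
  rw [Znum_nth hv, Znum_nth hv, visit, visit, if_pos (Nat.nth_mem_of_infinite hv a),
    if_pos (Nat.nth_mem_of_infinite hv b)] at this
  simp only [excessAtVisit]
  linarith

lemma sum_excessAtVisit_le_drift (hX : NearestNeighbor X ω) (hv : {k | X k ω = v}.Infinite)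
    (M : ℕ) : ∑ m ∈ range M, excessAtVisit X v m ω
        / ((m + 2) * (m + 2 + excessAtVisit X v m ω))
      ≤ drift X v (Nat.nth (fun k => X k ω = v) M) ω := by
  set t := Nat.nth (fun k => X k ω = v)
  have ht : StrictMono t := Nat.nth_strictMono hv
  have hterm : ∀ m, excessAtVisit X v m ω / ((m + 2) * (m + 2 + excessAtVisit X v m ω))
      = visit X (t m) v ω
        * (1 / Znum X (t m) v ω - 1 / (Znum X (t m) (v - 1) ω + Znum X (t m) (v + 1) ω)) :=
    fun m => by
      have hd : Znum X (t m) (v - 1) ω + Znum X (t m) (v + 1) ω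
          = m + 2 + excessAtVisit X v m ω := by
        rw [excessAtVisit]
        ring
      have := excessAtVisit_nonneg hX hv m
      rw [visit, if_pos (Nat.nth_mem_of_infinite hv m), Znum_nth hv, hd]
      field_simp
      ring
  calc _ = ∑ k ∈ (range M).image t, visit X k v ω
        * (1 / Znum X k v ω - 1 / (Znum X k (v - 1) ω + Znum X k (v + 1) ω)) := by
        rw [sum_image fun a _ b _ h => ht.injective h]
        exact sum_congr rfl fun m _ => hterm m
    _ ≤ drift X v (t M) ω := by
        refine sum_le_sum_of_subset_of_nonneg (fun k hk => ?_)
          fun k _ _ => drift_term_nonneg hX k v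
        obtain ⟨m, hm, rfl⟩ := mem_image.1 hk
        exact mem_range.2 (ht (mem_range.1 hm))

/-- `Z(v - 1) + Z(v + 1)` only grows until the `j`-th visit, where it equals `j + 2 + E_j`. -/
lemma le_Znum_div_neighbors (hX : NearestNeighbor X ω) (hv : {k | X k ω = v}.Infinite) {n j : ℕ}
    (hn : n ≤ Nat.nth (fun k => X k ω = v) j) (hZ : Znum X n v ω = j + 1) :
    1 - excessAtVisit X v j ω / (j + 2 + excessAtVisit X v j ω) - 1 / ((j : ℝ) + 2)
      ≤ Znum X n v ω / (Znum X n (v - 1) ω + Znum X n (v + 1) ω) := by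
  set E := excessAtVisit X v j ω
  have hE0 : 0 ≤ E := excessAtVisit_nonneg hX hv j
  have hd : Znum X n (v - 1) ω + Znum X n (v + 1) ω ≤ j + 2 + E := by
    have := add_le_add (monotone_Znum (X := X) (ω := ω) (v - 1) hn)
      (monotone_Znum (X := X) (ω := ω) (v + 1) hn)
    simp only [E, excessAtVisit]
    linarith
  have hD : (0 : ℝ) < j + 2 + E := by positivity
  rw [hZ]
  calc 1 - E / (j + 2 + E) - 1 / ((j : ℝ) + 2) ≤ 1 - E / (j + 2 + E) - 1 / (j + 2 + E) :=
        sub_le_sub_left (one_div_le_one_div_of_le (by positivity) (by linarith)) _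
    _ = ((j : ℝ) + 1) / (j + 2 + E) := by
      field_simp
      ring
    _ ≤ ((j : ℝ) + 1) / (Znum X n (v - 1) ω + Znum X n (v + 1) ω) := by
      gcongr
      exact add_pos Znum_pos Znum_pos

lemma tendsto_Znum_div_neighbors (hX : NearestNeighbor X ω) (hv : {k | X k ω = v}.Infinite)
    (hW : BddAbove (Set.range fun n => drift X v n ω)) :
    Tendsto (fun n => Znum X n v ω / (Znum X n (v - 1) ω + Znum X n (v + 1) ω)) atTop (𝓝 1) := by
  set p : ℕ → Prop := fun k => X k ω = v
  set E : ℕ → ℝ := fun m => excessAtVisit X v m ω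
  set j : ℕ → ℕ := fun n => Nat.count p (n + 1)
  obtain ⟨B, hB⟩ := hW
  have hE : Tendsto (fun m => E m / (m + 2 + E m)) atTop (𝓝 0) :=
    tendsto_div_add_of_monotone_of_sum_le (excessAtVisit_nonneg hX hv)
      (monotone_excessAtVisit hX hv) fun M =>
        (sum_excessAtVisit_le_drift hX hv M).trans (hB ⟨_, rfl⟩)
  have hinv : Tendsto (fun m : ℕ => 1 / ((m : ℝ) + 2)) atTop (𝓝 0) := by
    simpa [one_div, Pi.inv_def] using
      (tendsto_atTop_add_const_right _ 2 tendsto_natCast_atTop_atTop).inv_tendsto_atTop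
  have hj : Tendsto j atTop atTop := (tendsto_count_atTop hv).comp (tendsto_add_atTop_nat 1)
  have hlim := ((tendsto_const_nhds (x := (1 : ℝ))).sub (hE.comp hj)).sub (hinv.comp hj)
  rw [sub_zero, sub_zero] at hlim
  refine tendsto_of_tendsto_of_tendsto_of_le_of_le hlim tendsto_const_nhds (fun n => ?_)
    fun n => div_le_one_of_le₀ (Znum_le_neighbors hX n v) (add_pos Znum_pos Znum_pos).le
  have hnext : n ≤ Nat.nth p (j n) :=
    le_of_not_gt fun h => lt_irrefl _ ((Nat.lt_nth_iff_count_lt hv).2 (Nat.lt_succ_of_lt h))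
  exact le_Znum_div_neighbors hX hv hnext (Znum_eq_count n v)

end Ratio

theorem betaMinus_limit_of_path (hX : NearestNeighbor X ω) (x : ℤ)
    (hplus : ∃ c, Tendsto (fun n => Ycross X x (x + 1) n ω - Ynum X n x ω) atTop (𝓝 c))
    (hminus : ∃ c,
      Tendsto (fun n => Ycross X (x + 2) (x + 1) n ω - Ynum X n (x + 2) ω) atTop (𝓝 c))
    (hΥ : ω ∈ Upsilon X x) :
    ∃ l : ℝ, 0 ≤ l ∧ Tendsto (fun n => Znum X n (x + 1) ω / Znum X n (x + 2) ω) atTop (𝓝 l) ∧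
      (¬ BddAbove (Set.range fun n => Znum X n (x + 2) ω) →
        Tendsto (fun n => alphaMinus X n (x + 2) ω) atTop (𝓝 l)) := by
  have hx : x + 2 - 1 = x + 1 := by ring
  obtain ⟨L, hL⟩ := exists_tendsto_log_betaMinus_add_drift hX x hplus hminus hΥ
  have hexp : ∀ n, Real.exp ((Real.log (Znum X n (x + 1) ω / Znum X n (x + 2) ω)
      + drift X (x + 2) n ω) - drift X (x + 2) n ω) = Znum X n (x + 1) ω / Znum X n (x + 2) ω :=
    fun n => by rw [add_sub_cancel_right, Real.exp_log (div_pos Znum_pos Znum_pos)]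
  rcases tendsto_atTop_of_monotone (monotone_drift hX (x + 2)) with hW | ⟨w, hW⟩
  · have hβ := (Real.tendsto_exp_atBot.comp
      (hL.add_atBot (tendsto_neg_atTop_atBot.comp hW))).congr
        fun n => (congrArg Real.exp (sub_eq_add_neg _ _)).symm.trans (hexp n)
    refine ⟨0, le_rfl, hβ, fun _ => squeeze_zero (fun n => ?_) (fun n => ?_) hβ⟩
    · exact div_nonneg Znum_pos.le (add_pos Znum_pos Znum_pos).le
    · simpa only [hx] using alphaMinus_le hX n (x + 2)
  · have hβ := ((Real.continuous_exp.tendsto _).comp (hL.sub hW)).congr hexp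
    refine ⟨_, (Real.exp_pos _).le, hβ, fun hunb => ?_⟩
    have hr := tendsto_Znum_div_neighbors hX (infinite_setOf_of_not_bddAbove hunb)
      hW.bddAbove_range
    rw [← mul_one (Real.exp _)]
    exact (hβ.mul hr).congr fun n => by rw [alphaMinus_eq_mul, hx]

section QuadraticVariation

lemma sum_sq_crossing_div_Znum_le (y z : ℤ) (n : ℕ) :
    ∑ k ∈ range n, (crossing X k y z ω / Znum X k z ω) ^ 2 ≤ 2 := by
  set p : ℕ → Prop := fun i => X i ω = z
  have hterm : ∀ j, 0 ≤ (if p j then 1 else 0) / ((Nat.count p j : ℝ) + 1) ^ 2 := fun j =>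
    div_nonneg visit_nonneg (by positivity)
  calc _ ≤ ∑ k ∈ range n, (if p (k + 1) then 1 else 0) / ((Nat.count p (k + 1) : ℝ) + 1) ^ 2 :=
        sum_le_sum fun k _ => by
          rw [Znum_eq_count]
          exact (sq_div_le_div_sq crossing_nonneg crossing_le_one (by positivity) le_rfl).trans
            (div_le_div_of_nonneg_right crossing_le_visit_succ (by positivity))
    _ ≤ ∑ j ∈ range (n + 1), (if p j then 1 else 0) / ((Nat.count p j : ℝ) + 1) ^ 2 := by
        rw [sum_range_succ']
        linarith [hterm 0]
    _ ≤ 2 := sum_div_sq_count_le_two p (n + 1)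

lemma sum_sq_visit_div_neighbors_le (hX : NearestNeighbor X ω) (y : ℤ) (n : ℕ) :
    ∑ k ∈ range n, (visit X k y ω / (Znum X k (y - 1) ω + Znum X k (y + 1) ω)) ^ 2 ≤ 2 := by
  set p : ℕ → Prop := fun i => X i ω = y
  refine le_trans (sum_le_sum fun k _ => ?_) (sum_div_sq_count_le_two p n)
  refine sq_div_le_div_sq visit_nonneg visit_le_one (by positivity) ?_
  refine le_trans ?_ (Znum_le_neighbors hX k y)
  rw [Znum_eq_count]
  gcongr
  exact k.le_succ

lemma sum_sq_increment_le (hX : NearestNeighbor X ω) (y z : ℤ) (n : ℕ) :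
    ∑ k ∈ range n, (crossing X k y z ω / Znum X k z ω
      - visit X k y ω / (Znum X k (y - 1) ω + Znum X k (y + 1) ω)) ^ 2 ≤ 4 := by
  have hle : ∀ k, (crossing X k y z ω / Znum X k z ω
      - visit X k y ω / (Znum X k (y - 1) ω + Znum X k (y + 1) ω)) ^ 2
      ≤ (crossing X k y z ω / Znum X k z ω) ^ 2
        + (visit X k y ω / (Znum X k (y - 1) ω + Znum X k (y + 1) ω)) ^ 2 := fun k => by
    have ha : 0 ≤ crossing X k y z ω / Znum X k z ω := div_nonneg crossing_nonneg Znum_pos.le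
    have hb : 0 ≤ visit X k y ω / (Znum X k (y - 1) ω + Znum X k (y + 1) ω) :=
      div_nonneg visit_nonneg (add_pos Znum_pos Znum_pos).le
    nlinarith [mul_nonneg ha hb]
  calc _ ≤ _ := sum_le_sum fun k _ => hle k
    _ ≤ 2 + 2 := by
      rw [sum_add_distrib]
      exact add_le_add (sum_sq_crossing_div_Znum_le y z n) (sum_sq_visit_div_neighbors_le hX y n)
    _ = 4 := by norm_num

end QuadraticVariation

section Probability

variable {m0 : MeasurableSpace Ω} {μ : Measure Ω} {ℱ : Filtration ℕ m0} {v0 : ℤ}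

lemma measurable_visit (hX : Adapted ℱ X) (hkn : k ≤ n) (v : ℤ) :
    Measurable[ℱ n] (visit X k v) :=
  Measurable.ite ((hX k).mono (ℱ.mono hkn) le_rfl (measurableSet_singleton v))
    measurable_const measurable_const

lemma measurable_Znum (hX : Adapted ℱ X) (hkn : k ≤ n) (v : ℤ) : Measurable[ℱ n] (Znum X k v) :=
  measurable_const.add (Finset.measurable_sum _ fun _ hi =>
    measurable_visit hX ((Nat.lt_succ_iff.1 (mem_range.1 hi)).trans hkn) v)

lemma measurable_crossing_div_Znum (hX : Adapted ℱ X) (hkn : k + 1 ≤ n) (y z : ℤ) :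
    Measurable[ℱ n] fun ω => crossing X k y z ω / Znum X k z ω := by
  simp only [crossing_eq_visit_mul]
  exact ((measurable_visit hX (by omega) y).mul (measurable_visit hX hkn z)).div
    (measurable_Znum hX (by omega) z)

lemma measurable_visit_div_neighbors (hX : Adapted ℱ X) (hkn : k ≤ n) (y : ℤ) :
    Measurable[ℱ n] fun ω => visit X k y ω / (Znum X k (y - 1) ω + Znum X k (y + 1) ω) :=
  (measurable_visit hX hkn y).div
    ((measurable_Znum hX hkn (y - 1)).add (measurable_Znum hX hkn (y + 1)))

lemma Ycross_sub_Ynum_eq_sum (y z : ℤ) (n : ℕ) : Ycross X y z n ω - Ynum X n y ω =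
    ∑ k ∈ range n, (crossing X k y z ω / Znum X k z ω
      - visit X k y ω / (Znum X k (y - 1) ω + Znum X k (y + 1) ω)) := by
  rw [Ycross, Ynum_eq_sum_range, sum_sub_distrib]

lemma Ycross_sub_Ynum_succ_sub (y z : ℤ) (n : ℕ) :
    (Ycross X y z (n + 1) ω - Ynum X (n + 1) y ω) - (Ycross X y z n ω - Ynum X n y ω)
      = crossing X n y z ω / Znum X n z ω
        - visit X n y ω / (Znum X n (y - 1) ω + Znum X n (y + 1) ω) := by
  rw [Ycross_sub_Ynum_eq_sum, Ycross_sub_Ynum_eq_sum, sum_range_succ, add_sub_cancel_left]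

lemma measurable_Ycross_sub_Ynum (hX : Adapted ℱ X) (y z : ℤ) (n : ℕ) :
    Measurable[ℱ n] fun ω => Ycross X y z n ω - Ynum X n y ω := by
  simp only [Ycross_sub_Ynum_eq_sum]
  exact Finset.measurable_sum _ fun k hk =>
    (measurable_crossing_div_Znum hX (mem_range.1 hk) y z).sub
      (measurable_visit_div_neighbors hX (mem_range.1 hk).le y)

lemma abs_Ycross_sub_Ynum_le (y z : ℤ) (n : ℕ) : |Ycross X y z n ω - Ynum X n y ω| ≤ n := by
  have hterm : ∀ k, |crossing X k y z ω / Znum X k z ω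
      - visit X k y ω / (Znum X k (y - 1) ω + Znum X k (y + 1) ω)| ≤ 1 := fun k =>
    abs_sub_le_iff.2 ⟨(sub_le_self _ visit_div_neighbors_nonneg).trans crossing_div_Znum_le_one,
      (sub_le_self _ crossing_div_Znum_nonneg).trans visit_div_neighbors_le_one⟩
  rw [Ycross_sub_Ynum_eq_sum]
  calc _ ≤ ∑ k ∈ range n, (1 : ℝ) :=
        (abs_sum_le_sum_abs _ _).trans (sum_le_sum fun k _ => hterm k)
    _ = n := by simp

lemma memLp_Ycross_sub_Ynum [IsFiniteMeasure μ] (hX : Adapted ℱ X) (y z : ℤ) (n : ℕ) :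
    MemLp (fun ω => Ycross X y z n ω - Ynum X n y ω) 2 μ :=
  .of_bound ((measurable_Ycross_sub_Ynum hX y z n).mono (ℱ.le n) le_rfl).aestronglyMeasurable n
    (ae_of_all _ fun _ => abs_Ycross_sub_Ynum_le y z n)

lemma condExp_crossing_div_Znum [IsFiniteMeasure μ] (h : IsVRRW μ ℱ X v0) {y z : ℤ}
    (hz : z = y + 1 ∨ z = y - 1) (n : ℕ) :
    μ[fun ω => crossing X n y z ω / Znum X n z ω | ℱ n]
      =ᵐ[μ] fun ω => visit X n y ω / (Znum X n (y - 1) ω + Znum X n (y + 1) ω) := by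
  set g : Ω → ℝ := fun ω => visit X n y ω / Znum X n z ω
  set I : Ω → ℝ := Set.indicator {ω | X (n + 1) ω = z} fun _ => 1
  have hg : Measurable[ℱ n] g :=
    (measurable_visit h.adapted le_rfl y).div (measurable_Znum h.adapted le_rfl z)
  have hI : Measurable[ℱ (n + 1)] I :=
    measurable_const.indicator ((h.adapted (n + 1)) (measurableSet_singleton z))
  have hI01 : ∀ ω, I ω ∈ Set.Icc (0 : ℝ) 1 := fun ω => by
    simp only [I, Set.indicator_apply]
    split_ifs <;> norm_num
  have hIint : Integrable I μ :=
    .of_mem_Icc 0 1 (hI.mono (ℱ.le _) le_rfl).aemeasurable (ae_of_all _ hI01)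
  have hgI : (fun ω => crossing X n y z ω / Znum X n z ω) = g * I := by
    ext ω
    by_cases hz' : X (n + 1) ω = z <;> simp [g, I, crossing_eq_visit_mul, visit, hz']
  have hgIint : Integrable (g * I) μ := by
    rw [← hgI]
    exact .of_mem_Icc 0 1 ((measurable_crossing_div_Znum h.adapted le_rfl y z).mono
      (ℱ.le _) le_rfl).aemeasurable (ae_of_all _ fun _ =>
        ⟨crossing_div_Znum_nonneg, crossing_div_Znum_le_one⟩)
  rw [hgI]
  filter_upwards [condExp_mul_of_stronglyMeasurable_left hg.stronglyMeasurable hgIint hIint,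
    h.step n] with ω hmul hstep
  rw [hmul, Pi.mul_apply, hstep z]
  by_cases hy : X n ω = y
  · rw [if_pos (hy ▸ hz), hy]
    have : Znum X n z ω ≠ 0 := Znum_pos.ne'
    simp only [g, visit, if_pos hy]
    field_simp
  · simp [g, visit, hy]

lemma martingale_Ycross_sub_Ynum [IsFiniteMeasure μ] (h : IsVRRW μ ℱ X v0) {y z : ℤ}
    (hz : z = y + 1 ∨ z = y - 1) :
    Martingale (fun n ω => Ycross X y z n ω - Ynum X n y ω) ℱ μ := by
  refine martingale_of_condExp_sub_eq_zero_nat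
    (fun n => (measurable_Ycross_sub_Ynum h.adapted y z n).stronglyMeasurable)
    (fun n => (memLp_Ycross_sub_Ynum h.adapted y z n).integrable one_le_two) fun n => ?_
  have hu : Integrable (fun ω => crossing X n y z ω / Znum X n z ω) μ :=
    .of_mem_Icc 0 1 ((measurable_crossing_div_Znum h.adapted le_rfl y z).mono
      (ℱ.le _) le_rfl).aemeasurable (ae_of_all _ fun _ =>
        ⟨crossing_div_Znum_nonneg, crossing_div_Znum_le_one⟩)
  have hvm := measurable_visit_div_neighbors h.adapted (le_refl n) y
  have hv : Integrable (fun ω => visit X n y ω / (Znum X n (y - 1) ω + Znum X n (y + 1) ω)) μ :=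
    .of_mem_Icc 0 1 (hvm.mono (ℱ.le _) le_rfl).aemeasurable (ae_of_all _ fun _ =>
      ⟨visit_div_neighbors_nonneg, visit_div_neighbors_le_one⟩)
  have hinc : (fun ω => Ycross X y z (n + 1) ω - Ynum X (n + 1) y ω)
      - (fun ω => Ycross X y z n ω - Ynum X n y ω) = (fun ω => crossing X n y z ω / Znum X n z ω)
        - fun ω => visit X n y ω / (Znum X n (y - 1) ω + Znum X n (y + 1) ω) :=
    funext fun ω => Ycross_sub_Ynum_succ_sub y z n
  rw [hinc]
  filter_upwards [condExp_sub hu hv (ℱ n), condExp_crossing_div_Znum h hz n] with ω hsub hcross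
  rw [hsub, Pi.sub_apply, hcross, condExp_of_stronglyMeasurable (ℱ.le n) hvm.stronglyMeasurable hv,
    Pi.zero_apply, sub_self]

theorem ae_exists_tendsto_Ycross_sub_Ynum [IsFiniteMeasure μ] (h : IsVRRW μ ℱ X v0) {y z : ℤ}
    (hz : z = y + 1 ∨ z = y - 1) :
    ∀ᵐ ω ∂μ, ∃ c, Tendsto (fun n => Ycross X y z n ω - Ynum X n y ω) atTop (𝓝 c) :=
  (martingale_Ycross_sub_Ynum h hz).ae_exists_tendsto_of_sum_sq_le
    (memLp_Ycross_sub_Ynum h.adapted y z) ((ae_all_iff.2 h.nearest).mono fun _ hX n => by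
      simpa only [Ycross_sub_Ynum_succ_sub] using sum_sq_increment_le hX y z n)

end Probability

end VRRW

/-- Corollary 3.1(iv)–(v) of Tarrès: a.s. on `Υ(x)` the limit
`β⁻_∞(x+2) = lim_n Z_n(x+1)/Z_n(x+2)` exists in `[0,∞)`, and if moreover
`Z_∞(x+2) = ∞` then `α⁻_n(x+2)` converges to the same limit. -/
theorem betaMinus_limit
    {Ω : Type*} {m0 : MeasurableSpace Ω} (μ : Measure Ω) [IsProbabilityMeasure μ]
    (ℱ : Filtration ℕ m0) (X : ℕ → Ω → ℤ) (v0 : ℤ) (h : IsVRRW μ ℱ X v0) (x : ℤ) :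
    ∀ᵐ ω ∂μ, ω ∈ Upsilon X x →
      ∃ l : ℝ, 0 ≤ l ∧
        Tendsto (fun n => Znum X n (x + 1) ω / Znum X n (x + 2) ω) atTop (nhds l) ∧
        (¬ BddAbove (Set.range fun n => Znum X n (x + 2) ω) →
          Tendsto (fun n => alphaMinus X n (x + 2) ω) atTop (nhds l)) := by
  filter_upwards [VRRW.ae_exists_tendsto_Ycross_sub_Ynum h (y := x) (Or.inl rfl),
    VRRW.ae_exists_tendsto_Ycross_sub_Ynum h (y := x + 2) (z := x + 1) (Or.inr (by ring)),
    ae_all_iff.2 h.nearest] with ω hplus hminus hX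
  exact VRRW.betaMinus_limit_of_path hX x hplus hminus
end

section
/- For the VRRW on ℤ started at v₀ ∈ ℤ, the quantity R_n = Z_n(2) + Z_n(4) - Z_n(1) - Z_n(3) satisfies, for all n, R_n = Z_n^-(5) - Z_n^+(0) + (1_{X_n=2 or X_n≥4} - 1_{X_n≤1 or X_n=3})/2 + C(v₀), where C(v₀) depends only on the initial position; consequently R_n increases only through visits from 5 to 4 and decreases only through visits from 0 to 1. -/
/-!
A step of the path onto the site `b` changes `R = Z(2) + Z(4) - Z(1) - Z(3)` by
`1_{b ∈ {2,4}} - 1_{b ∈ {1,3}}`. With `φ x = 1_{x=2 ∨ x≥4} - 1_{x≤1 ∨ x=3}`, half the increment of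
`φ(X_n)` reproduces this on every nearest-neighbour step except `5 → 4` and `0 → 1`, where it
falls short by `1` and exceeds it by `1` respectively. Summing over steps gives the identity with
`C = R_0 - φ(X_0)/2`.
-/

/-- `Zd X n v`: `1` plus the number of visits of the deterministic path `X`
to the site `v` up through time `n`, as a real number. -/
noncomputable def Zd (X : ℕ → ℤ) (n : ℕ) (v : ℤ) : ℝ :=
  1 + ∑ i ∈ Finset.range (n + 1), if X i = v then (1 : ℝ) else 0

theorem eq_add_const_of_sub_succ_eq {G : Type*} [AddCommGroup G] {u w : ℕ → G}
    (h : ∀ n, u (n + 1) - u n = w (n + 1) - w n) (n : ℕ) :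
    u n = w n + (u 0 - w 0) := by
  induction n with
  | zero => abel
  | succ n ih => rw [← sub_add_cancel (u (n + 1)) (u n), h n, ih]; abel

theorem Zd_succ (X : ℕ → ℤ) (n : ℕ) (v : ℤ) :
    Zd X (n + 1) v = Zd X n v + if X (n + 1) = v then 1 else 0 := by
  simp only [Zd, Finset.sum_range_succ]
  ring

theorem sum_Icc_one_succ_sub {M : Type*} [AddCommGroup M] (f : ℕ → M) (n : ℕ) :
    ∑ k ∈ Finset.Icc 1 (n + 1), f k - ∑ k ∈ Finset.Icc 1 n, f k = f (n + 1) := by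
  rw [Finset.sum_Icc_succ_top (by omega), add_sub_cancel_left]

noncomputable def siteWeight (b : ℤ) : ℝ :=
  (if b = 2 then 1 else 0) + (if b = 4 then 1 else 0) -
    (if b = 1 then 1 else 0) - (if b = 3 then 1 else 0)

noncomputable def alternatingSign (x : ℤ) : ℝ :=
  (if x = 2 ∨ 4 ≤ x then 1 else 0) - (if x ≤ 1 ∨ x = 3 then 1 else 0)

theorem siteWeight_eq_of_nearest_neighbor {a b : ℤ} (hab : b = a + 1 ∨ b = a - 1) :
    siteWeight b =
      (if a = 5 ∧ b = 4 then 1 else 0) - (if a = 0 ∧ b = 1 then 1 else 0) +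
        (alternatingSign b - alternatingSign a) / 2 := by
  unfold siteWeight alternatingSign
  obtain h | ⟨h0, h5⟩ | h : a < 0 ∨ (0 ≤ a ∧ a ≤ 5) ∨ 5 < a := by omega
  · simp (disch := omega) only [if_pos, if_neg]; norm_num
  · rcases hab with rfl | rfl <;> interval_cases a <;> norm_num
  · simp (disch := omega) only [if_pos, if_neg]; norm_num

theorem R_decomposition_general (X : ℕ → ℤ)
    (hnn : ∀ n, X (n + 1) = X n + 1 ∨ X (n + 1) = X n - 1) :
    ∃ C : ℝ, ∀ n : ℕ,
      Zd X n 2 + Zd X n 4 - Zd X n 1 - Zd X n 3 =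
        (∑ k ∈ Finset.Icc 1 n, if X (k - 1) = 5 ∧ X k = 4 then (1 : ℝ) else 0) -
        (∑ k ∈ Finset.Icc 1 n, if X (k - 1) = 0 ∧ X k = 1 then (1 : ℝ) else 0) +
        ((if X n = 2 ∨ 4 ≤ X n then (1 : ℝ) else 0) -
          (if X n ≤ 1 ∨ X n = 3 then (1 : ℝ) else 0)) / 2 + C := by
  refine ⟨_, eq_add_const_of_sub_succ_eq fun n => ?_⟩
  rw [Zd_succ, Zd_succ, Zd_succ, Zd_succ]
  have hR := siteWeight_eq_of_nearest_neighbor (hnn n)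
  have h54 := sum_Icc_one_succ_sub (fun k => if X (k - 1) = 5 ∧ X k = 4 then (1 : ℝ) else 0) n
  have h01 := sum_Icc_one_succ_sub (fun k => if X (k - 1) = 0 ∧ X k = 1 then (1 : ℝ) else 0) n
  simp only [siteWeight, alternatingSign, Nat.add_sub_cancel] at hR h54 h01
  linarith

/-- Equation (23) of Tarrès: for any nearest-neighbor path on `ℤ`, the quantity
`R_n = Z_n(2) + Z_n(4) - Z_n(1) - Z_n(3)` equals
`Z_n^-(5) - Z_n^+(0) + (1_{X_n=2 ∨ X_n≥4} - 1_{X_n≤1 ∨ X_n=3})/2` plus a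
constant depending only on the initial position. -/
theorem R_decomposition (X : ℕ → ℤ) (v0 : ℤ) (h0 : X 0 = v0)
    (hnn : ∀ n, X (n + 1) = X n + 1 ∨ X (n + 1) = X n - 1) :
    ∃ C : ℝ, ∀ n : ℕ,
      Zd X n 2 + Zd X n 4 - Zd X n 1 - Zd X n 3 =
        (∑ k ∈ Finset.Icc 1 n, if X (k - 1) = 5 ∧ X k = 4 then (1 : ℝ) else 0) -
        (∑ k ∈ Finset.Icc 1 n, if X (k - 1) = 0 ∧ X k = 1 then (1 : ℝ) else 0) +
        ((if X n = 2 ∨ 4 ≤ X n then (1 : ℝ) else 0) -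
          (if X n ≤ 1 ∨ X n = 3 then (1 : ℝ) else 0)) / 2 + C :=
  R_decomposition_general X hnn
end

section
/- Coupling monotonicity for nearest-neighbor walks on ℤ: let ℳ and ℳ' be two random walks on ℤ driven by the same family of i.i.d. uniform random variables (ω_{i,j})_{i∈ℕ*, j∈ℤ} (the walk moves right after its i-th visit to j iff ω_{i,j} ≤ the respective conditional probability), started at the same point. Suppose that whenever the condition E_{i,j}(v, v') holds (at their respective i-th visit times to j, the path v' has visited j+1 at least as often as v and visited j-1 at most as often as v), the probability for ℳ' to step right exceeds or equals that for ℳ. Then almost surely, E_{i,j} holds for all i ∈ ℕ* and j ∈ ℤ; i.e., ℳ' ≫ ℳ. -/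
/-- `Zp X n v`: `1` plus the number of visits of the path `X` to the site `v`
up through time `n`. -/
def Zp (X : ℕ → ℤ) (n : ℕ) (v : ℤ) : ℕ :=
  1 + ((Finset.range (n + 1)).filter fun m => X m = v).card

/-- `IsNthVisit X i j n` : time `n` is the `i`-th visit (with `i ≥ 1`) of the
path `X` to the site `j`. -/
def IsNthVisit (X : ℕ → ℤ) (i : ℕ) (j : ℤ) (n : ℕ) : Prop :=
  X n = j ∧ ((Finset.range n).filter fun m => X m = j).card + 1 = i

/-- The comparison condition `E_{i,j}(v, v')`: at their respective `i`-th visit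
times to `j`, the path `v'` has visited `j+1` at least as often as `v` and
`j-1` at most as often as `v`.  With this formulation the condition holds
vacuously when either visit time is infinite, as in the paper's convention. -/
def Econd (v v' : ℕ → ℤ) (i : ℕ) (j : ℤ) : Prop :=
  ∀ n n' : ℕ, IsNthVisit v i j n → IsNthVisit v' i j n' →
    Zp v n (j + 1) ≤ Zp v' n' (j + 1) ∧ Zp v' n' (j - 1) ≤ Zp v n (j - 1)

namespace CouplingAux

/-- number of visits of `v` to `j` strictly before time `n`. -/
def cnt (v : ℕ → ℤ) (j : ℤ) (n : ℕ) : ℕ :=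
  ((Finset.range n).filter fun m => v m = j).card

/-- number of times `m < n` at which `v` is at `j` and steps to `s`. -/
def dirc (v : ℕ → ℤ) (j s : ℤ) (n : ℕ) : ℕ :=
  ((Finset.range n).filter fun m => v m = j ∧ v (m + 1) = s).card

lemma card_filter_succ (p : ℕ → Prop) [DecidablePred p] (n : ℕ) :
    ((Finset.range (n + 1)).filter p).card
      = ((Finset.range n).filter p).card + (if p n then 1 else 0) := by
  rw [Finset.range_add_one, Finset.filter_insert]
  split_ifs with h
  · rw [Finset.card_insert_of_notMem (by simp)]
  · simp

lemma cnt_succ (v : ℕ → ℤ) (j : ℤ) (n : ℕ) :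
    cnt v j (n + 1) = cnt v j n + (if v n = j then 1 else 0) :=
  card_filter_succ _ n

lemma dirc_succ (v : ℕ → ℤ) (j s : ℤ) (n : ℕ) :
    dirc v j s (n + 1) = dirc v j s n + (if v n = j ∧ v (n + 1) = s then 1 else 0) :=
  card_filter_succ _ n

lemma cnt_zero (v : ℕ → ℤ) (j : ℤ) : cnt v j 0 = 0 := rfl

lemma cnt_mono (v : ℕ → ℤ) (j : ℤ) {a b : ℕ} (h : a ≤ b) : cnt v j a ≤ cnt v j b :=
  Finset.card_le_card (Finset.filter_subset_filter _ (Finset.range_subset_range.2 h))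

lemma dirc_mono (v : ℕ → ℤ) (j s : ℤ) {a b : ℕ} (h : a ≤ b) : dirc v j s a ≤ dirc v j s b :=
  Finset.card_le_card (Finset.filter_subset_filter _ (Finset.range_subset_range.2 h))

lemma cnt_lt {v : ℕ → ℤ} {j : ℤ} {m n : ℕ} (hm : v m = j) (hmn : m < n) :
    cnt v j m < cnt v j n := by
  have h1 : cnt v j (m + 1) = cnt v j m + 1 := by rw [cnt_succ, if_pos hm]
  have h2 := cnt_mono v j (show m + 1 ≤ n from hmn)
  omega

lemma isNth_iff {v : ℕ → ℤ} {i : ℕ} {j : ℤ} {n : ℕ} :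
    IsNthVisit v i j n ↔ v n = j ∧ cnt v j n + 1 = i := Iff.rfl

lemma nth_unique {v : ℕ → ℤ} {i : ℕ} {j : ℤ} {m n : ℕ}
    (h1 : IsNthVisit v i j m) (h2 : IsNthVisit v i j n) : m = n := by
  rcases Nat.lt_trichotomy m n with h | h | h
  · have := cnt_lt h1.1 h
    have e1 : cnt v j m + 1 = _ := h1.2; have e2 : cnt v j n + 1 = _ := h2.2; omega
  · exact h
  · have := cnt_lt h2.1 h
    have e1 : cnt v j m + 1 = _ := h1.2; have e2 : cnt v j n + 1 = _ := h2.2; omega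

lemma exists_nth {v : ℕ → ℤ} {j : ℤ} {k n : ℕ} (hk : 1 ≤ k) (hkn : k ≤ cnt v j n) :
    ∃ m, m < n ∧ IsNthVisit v k j m := by
  induction n with
  | zero => rw [cnt_zero] at hkn; omega
  | succ n ih =>
    rw [cnt_succ] at hkn
    by_cases h : k ≤ cnt v j n
    · obtain ⟨m, hm, hnth⟩ := ih h
      exact ⟨m, Nat.lt_succ_of_lt hm, hnth⟩
    · by_cases hv : v n = j
      · rw [if_pos hv] at hkn
        refine ⟨n, Nat.lt_succ_self n, ⟨hv, ?_⟩⟩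
        show cnt v j n + 1 = k
        omega
      · rw [if_neg hv] at hkn; omega

lemma nth_lt {v : ℕ → ℤ} {j : ℤ} {k i m n : ℕ}
    (h1 : IsNthVisit v k j m) (h2 : IsNthVisit v i j n) (hk : k < i) : m < n := by
  rcases Nat.lt_trichotomy m n with h | h | h
  · exact h
  · subst h; have e1 : cnt v j m + 1 = _ := h1.2; have e2 : cnt v j m + 1 = _ := h2.2; omega
  · have := cnt_lt h2.1 h
    have e1 : cnt v j m + 1 = _ := h1.2; have e2 : cnt v j n + 1 = _ := h2.2; omega


/-- splitting visits before `n` into up-steps and down-steps. -/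
lemma cnt_split {v : ℕ → ℤ} (hv : ∀ n, v (n + 1) = v n + 1 ∨ v (n + 1) = v n - 1)
    (j : ℤ) (n : ℕ) : cnt v j n = dirc v j (j + 1) n + dirc v j (j - 1) n := by
  induction n with
  | zero => simp [cnt, dirc]
  | succ n ih =>
    rw [cnt_succ, dirc_succ, dirc_succ]
    by_cases hj : v n = j
    · rcases hv n with h | h
      · rw [if_pos hj, if_pos ⟨hj, by omega⟩, if_neg (by rintro ⟨-, h2⟩; omega)]
        omega
      · rw [if_pos hj, if_neg (by rintro ⟨-, h2⟩; omega), if_pos ⟨hj, by omega⟩]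
        omega
    · rw [if_neg hj, if_neg (by rintro ⟨h1, -⟩; exact hj h1),
        if_neg (by rintro ⟨h1, -⟩; exact hj h1)]
      omega

/-- crossing balance for the edge `(j, j+1)`. -/
lemma cross {v : ℕ → ℤ} (hv : ∀ n, v (n + 1) = v n + 1 ∨ v (n + 1) = v n - 1)
    (j : ℤ) (n : ℕ) :
    dirc v j (j + 1) n + (if j + 1 ≤ v 0 then 1 else 0)
      = dirc v (j + 1) j n + (if j + 1 ≤ v n then 1 else 0) := by
  induction n with
  | zero => simp [dirc]
  | succ n ih =>
    rw [dirc_succ, dirc_succ]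
    rcases hv n with h | h
    · by_cases hj : v n = j
      · rw [if_pos (show v n = j ∧ v (n + 1) = j + 1 from ⟨hj, by omega⟩),
          if_neg (show ¬(v n = j + 1 ∧ v (n + 1) = j) from by rintro ⟨h1, -⟩; omega)]
        rw [show (if j + 1 ≤ v (n + 1) then 1 else 0) = 1 from if_pos (by omega)]
        rw [show (if j + 1 ≤ v n then 1 else 0) = 0 from if_neg (by omega)] at ih
        omega
      · rw [if_neg (show ¬(v n = j ∧ v (n + 1) = j + 1) from by rintro ⟨h1, -⟩; exact hj h1),
          if_neg (show ¬(v n = j + 1 ∧ v (n + 1) = j) from by rintro ⟨h1, h2⟩; omega)]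
        rw [show (if j + 1 ≤ v (n + 1) then 1 else 0) = (if j + 1 ≤ v n then 1 else 0) from by
          split_ifs with h1 h2 <;> first | rfl | omega]
        omega
    · by_cases hj : v n = j + 1
      · rw [if_neg (show ¬(v n = j ∧ v (n + 1) = j + 1) from by rintro ⟨h1, -⟩; omega),
          if_pos (show v n = j + 1 ∧ v (n + 1) = j from ⟨hj, by omega⟩)]
        rw [show (if j + 1 ≤ v (n + 1) then 1 else 0) = 0 from if_neg (by omega)]
        rw [show (if j + 1 ≤ v n then 1 else 0) = 1 from if_pos (by omega)] at ih
        omega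
      · rw [if_neg (show ¬(v n = j ∧ v (n + 1) = j + 1) from by rintro ⟨h1, h2⟩; omega),
          if_neg (show ¬(v n = j + 1 ∧ v (n + 1) = j) from by rintro ⟨h1, -⟩; exact hj h1)]
        rw [show (if j + 1 ≤ v (n + 1) then 1 else 0) = (if j + 1 ≤ v n then 1 else 0) from by
          split_ifs with h1 h2 <;> first | rfl | omega]
        omega

/-- discrete intermediate value property. -/
lemma ivt {v : ℕ → ℤ} (hv : ∀ n, v (n + 1) = v n + 1 ∨ v (n + 1) = v n - 1) (w : ℤ) :
    ∀ d a, w ≤ v a → v (a + d) ≤ w → ∃ t, t ≤ d ∧ v (a + t) = w := by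
  intro d
  induction d with
  | zero => intro a h1 h2; exact ⟨0, le_refl _, le_antisymm (by simpa using h2) h1⟩
  | succ d ih =>
    intro a h1 h2
    by_cases hw : v a = w
    · exact ⟨0, Nat.zero_le _, hw⟩
    · have h1' : w ≤ v (a + 1) := by rcases hv a with h | h <;> omega
      have h2' : v (a + 1 + d) ≤ w := by
        have : a + 1 + d = a + (d + 1) := by omega
        rw [this]; exact h2
      obtain ⟨t, ht, hvt⟩ := ih (a + 1) h1' h2'
      exact ⟨t + 1, by omega, by rw [show a + (t + 1) = a + 1 + t from by omega]; exact hvt⟩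

/-- if the walk is at `j` at time `n`, its last visit to `j+1` before `n`
was followed by a step down to `j`. -/
lemma last_left {v : ℕ → ℤ} (hv : ∀ n, v (n + 1) = v n + 1 ∨ v (n + 1) = v n - 1)
    {j : ℤ} {c m n : ℕ} (hn : v n = j) (hm : IsNthVisit v c (j + 1) m) (hmn : m < n)
    (hc : cnt v (j + 1) n = c) : v (m + 1) = j := by
  rcases hv m with h | h
  · exfalso
    have hvm : v m = j + 1 := hm.1
    have h1 : j + 1 ≤ v (m + 1) := by omega
    have h2 : v (m + 1 + (n - (m + 1))) ≤ j + 1 := by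
      rw [show m + 1 + (n - (m + 1)) = n from by omega]; omega
    obtain ⟨t, ht, hvt⟩ := ivt hv (j + 1) (n - (m + 1)) (m + 1) h1 h2
    set s := m + 1 + t with hs
    have hsn : s ≤ n := by omega
    have hsn' : s < n := by
      rcases Nat.lt_or_ge s n with h' | h'
      · exact h'
      · exfalso; have : s = n := by omega
        rw [this, hn] at hvt; omega
    have e1 : cnt v (j + 1) (m + 1) = c := by
      rw [cnt_succ, if_pos hvm]
      have := hm.2; show cnt v (j+1) m + 1 = c; exact this
    have e2 : cnt v (j + 1) (s + 1) = cnt v (j + 1) s + 1 := by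
      rw [cnt_succ, if_pos hvt]
    have e3 : cnt v (j + 1) (m + 1) ≤ cnt v (j + 1) s := cnt_mono _ _ (by omega)
    have e4 : cnt v (j + 1) (s + 1) ≤ cnt v (j + 1) n := cnt_mono _ _ (by omega)
    omega
  · rw [hm.1] at h; omega

lemma Zp_eq {v : ℕ → ℤ} {j w : ℤ} {n : ℕ} (hn : v n = j) (hw : w ≠ j) :
    Zp v n w = 1 + cnt v w n := by
  show 1 + cnt v w (n + 1) = 1 + cnt v w n
  rw [cnt_succ, if_neg (fun h => hw (by rw [← h, hn]))]
  omega

lemma cnt_neg (v : ℕ → ℤ) (w : ℤ) (n : ℕ) :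
    cnt (fun t => -(v t)) w n = cnt v (-w) n := by
  unfold cnt
  congr 1
  apply Finset.filter_congr
  intro m _
  show (-(v m) = w) ↔ (v m = -w)
  omega

lemma isNth_neg {v : ℕ → ℤ} {k : ℕ} {w : ℤ} {m : ℕ} :
    IsNthVisit (fun t => -(v t)) k w m ↔ IsNthVisit v k (-w) m := by
  constructor
  · rintro ⟨h1, h2⟩
    have h1' : -(v m) = w := h1
    refine ⟨by omega, ?_⟩
    have h2' : cnt (fun t => -(v t)) w m + 1 = k := h2
    rw [cnt_neg] at h2'
    exact h2'
  · rintro ⟨h1, h2⟩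
    refine ⟨show -(v m) = w from by omega, ?_⟩
    show cnt (fun t => -(v t)) w m + 1 = k
    rw [cnt_neg]
    exact h2


/-- injection comparison: if `Y'` makes at least as many visits to `j` before `n'`
as `Y` before `n`, and stepping to `s` transfers along equal visit indices, then
the number of `j → s` steps of `Y` is at most that of `Y'`. -/
lemma dirc_le {Y Y' : ℕ → ℤ} {j s : ℤ} {n n' : ℕ}
    (hcnt : cnt Y j n ≤ cnt Y' j n')
    (hdom : ∀ k m m', IsNthVisit Y k j m → m < n → IsNthVisit Y' k j m' → m' < n' →
      Y (m + 1) = s → Y' (m' + 1) = s) :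
    dirc Y j s n ≤ dirc Y' j s n' := by
  classical
  have hex : ∀ m ∈ (Finset.range n).filter (fun m => Y m = j ∧ Y (m + 1) = s),
      ∃ m', (m' < n' ∧ IsNthVisit Y' (cnt Y j m + 1) j m') := by
    intro m hm
    rw [Finset.mem_filter, Finset.mem_range] at hm
    obtain ⟨hmn, hYm, -⟩ := hm
    have h1 : cnt Y j m + 1 ≤ cnt Y j n := cnt_lt hYm hmn
    exact exists_nth (by omega) (h1.trans hcnt)
  set f : ℕ → ℕ := fun m =>
    if h : ∃ m', (m' < n' ∧ IsNthVisit Y' (cnt Y j m + 1) j m') then h.choose else 0 with hf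
  have hfspec : ∀ m ∈ (Finset.range n).filter (fun m => Y m = j ∧ Y (m + 1) = s),
      f m < n' ∧ IsNthVisit Y' (cnt Y j m + 1) j (f m) := by
    intro m hm
    have h := hex m hm
    simp only [hf, dif_pos h]
    exact h.choose_spec
  apply Finset.card_le_card_of_injOn f
  · intro m hm
    obtain ⟨hfn, hfnth⟩ := hfspec m hm
    rw [Finset.mem_coe, Finset.mem_filter, Finset.mem_range] at hm ⊢
    obtain ⟨hmn, hYm, hYs⟩ := hm
    refine ⟨hfn, hfnth.1, ?_⟩
    exact hdom (cnt Y j m + 1) m (f m) ⟨hYm, rfl⟩ hmn hfnth (by omega) hYs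
  · intro m1 hm1 m2 hm2 heq
    simp only [Finset.coe_filter, Set.mem_setOf_eq, Finset.mem_range] at hm1 hm2
    obtain ⟨hfn1, hfnth1⟩ := hfspec m1 (by simp [Finset.mem_filter, Finset.mem_range, hm1.1, hm1.2])
    obtain ⟨hfn2, hfnth2⟩ := hfspec m2 (by simp [Finset.mem_filter, Finset.mem_range, hm2.1, hm2.2])
    rw [heq] at hfnth1
    have hkeq : cnt Y j m1 + 1 = cnt Y j m2 + 1 := by
      have e1 : cnt Y' j (f m2) + 1 = cnt Y j m1 + 1 := hfnth1.2
      have e2 : cnt Y' j (f m2) + 1 = cnt Y j m2 + 1 := hfnth2.2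
      omega
    rw [hkeq] at hfnth1
    -- now m1 and m2 are both the (cnt Y j m2 + 1)-th visit of Y to j
    exact nth_unique (v := Y) (⟨hm1.2.1, rfl⟩ : IsNthVisit Y (cnt Y j m1 + 1) j m1)
      (by rw [hkeq]; exact (⟨hm2.2.1, rfl⟩ : IsNthVisit Y (cnt Y j m2 + 1) j m2))

/-- the core deterministic comparison. -/
lemma core {Y Y' : ℕ → ℤ}
    (hY : ∀ n, Y (n + 1) = Y n + 1 ∨ Y (n + 1) = Y n - 1)
    (hY' : ∀ n, Y' (n + 1) = Y' n + 1 ∨ Y' (n + 1) = Y' n - 1)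
    (h0 : Y 0 = Y' 0) {i : ℕ} {j : ℤ} {n n' : ℕ}
    (hn : IsNthVisit Y i j n) (hn' : IsNthVisit Y' i j n')
    (hdom : ∀ k (w : ℤ) m m', IsNthVisit Y k w m → m < n → IsNthVisit Y' k w m' → m' < n' →
      Y (m + 1) = w + 1 → Y' (m' + 1) = w + 1) :
    cnt Y (j + 1) n ≤ cnt Y' (j + 1) n' := by
  -- left-step dominance (contrapositive)
  have hdomL : ∀ k (w : ℤ) m m', IsNthVisit Y' k w m' → m' < n' → IsNthVisit Y k w m → m < n →
      Y' (m' + 1) = w - 1 → Y (m + 1) = w - 1 := by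
    intro k w m m' hm' hm'n hm hmn hs
    rcases hY m with h | h
    · exfalso
      have := hdom k w m m' hm hmn hm' hm'n (by rw [hm.1] at h; omega)
      omega
    · rw [hm.1] at h; omega
  have hcj : cnt Y j n = cnt Y' j n' := by
    have e1 : cnt Y j n + 1 = i := hn.2
    have e2 : cnt Y' j n' + 1 = i := hn'.2
    omega
  -- up-steps from j compare
  have hup : dirc Y j (j + 1) n ≤ dirc Y' j (j + 1) n' :=
    dirc_le (le_of_eq hcj) (fun k m m' h1 h2 h3 h4 h5 => hdom k j m m' h1 h2 h3 h4 h5)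
  -- crossing identities
  have hYn : Y n = j := hn.1
  have hY'n : Y' n' = j := hn'.1
  have cY := cross hY j n
  have cY' := cross hY' j n'
  rw [show (if j + 1 ≤ Y n then 1 else 0) = 0 from if_neg (by omega)] at cY
  rw [show (if j + 1 ≤ Y' n' then 1 else 0) = 0 from if_neg (by omega)] at cY'
  rw [h0] at cY
  -- so dn Y ≤ dn Y'
  have hdn : dirc Y (j + 1) j n ≤ dirc Y' (j + 1) j n' := by omega
  -- suppose for contradiction that cnt Y' (j+1) n' < cnt Y (j+1) n
  by_contra hcon
  push_neg at hcon
  set c := cnt Y (j + 1) n with hc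
  have hc1 : 1 ≤ c := by omega
  obtain ⟨ms, hms, hmsnth⟩ := exists_nth hc1 (le_refl c)
  have hleft : Y (ms + 1) = j := last_left hY hYn hmsnth hms rfl
  have hcms : cnt Y (j + 1) ms + 1 = c := hmsnth.2
  -- all visits of Y' to j+1 before n' inject into visits of Y to j+1 before ms
  have hkey : dirc Y' (j + 1) j n' ≤ dirc Y (j + 1) j ms := by
    apply dirc_le
    · omega
    · intro k m' m h1 h2 h3 h4 h5
      have h6 : m < n := by omega
      have := hdomL k (j + 1) m m' h1 h2 h3 h6 (by rw [h5]; ring)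
      rw [this]; ring
  -- but ms itself is a further down-step of Y
  have hstrict : dirc Y (j + 1) j ms < dirc Y (j + 1) j n := by
    have e1 : dirc Y (j + 1) j (ms + 1) = dirc Y (j + 1) j ms + 1 := by
      rw [dirc_succ, if_pos ⟨hmsnth.1, hleft⟩]
    have e2 : dirc Y (j + 1) j (ms + 1) ≤ dirc Y (j + 1) j n := dirc_mono _ _ _ (by omega)
    omega
  omega


end CouplingAux

open CouplingAux in
/-- Lemma 4.1 of Tarrès (coupling monotonicity): let `X` and `X'` be two
nearest-neighbor walks on `ℤ` driven by the same family `W` of uniform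
variables (the walk moves right just after its `i`-th visit to `j` iff
`W i j ≤` its conditional probability to step right), started at the same
point.  If the step-right probability of `X'` dominates that of `X` whenever
the condition `E_{i,j}` holds, then `E_{i,j}(X, X')` holds for all `i, j`,
i.e. `X' ≫ X`. -/
theorem coupling_monotonicity (W : ℕ → ℤ → ℝ) (v0 : ℤ)
    (q q' : (ℕ → ℤ) → ℕ → ℝ) (X X' : ℕ → ℤ)
    (hX0 : X 0 = v0) (hX'0 : X' 0 = v0)
    (hX : ∀ n : ℕ, X (n + 1) =
      if W (((Finset.range (n + 1)).filter fun m => X m = X n).card) (X n) ≤ q X n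
      then X n + 1 else X n - 1)
    (hX' : ∀ n : ℕ, X' (n + 1) =
      if W (((Finset.range (n + 1)).filter fun m => X' m = X' n).card) (X' n) ≤ q' X' n
      then X' n + 1 else X' n - 1)
    (hmono : ∀ (v v' : ℕ → ℤ) (i : ℕ) (j : ℤ) (n n' : ℕ),
      Econd v v' i j → IsNthVisit v i j n → IsNthVisit v' i j n' →
      q v n ≤ q' v' n') :
    ∀ (i : ℕ) (j : ℤ), Econd X X' i j := by
  classical
  have hXnn : ∀ n, X (n + 1) = X n + 1 ∨ X (n + 1) = X n - 1 := by
    intro n; rw [hX n]; split_ifs <;> simp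
  have hX'nn : ∀ n, X' (n + 1) = X' n + 1 ∨ X' (n + 1) = X' n - 1 := by
    intro n; rw [hX' n]; split_ifs <;> simp
  -- the step taken at the k-th visit to w is decided by comparing W k w with q
  have hstep : ∀ k (w : ℤ) m, IsNthVisit X k w m → (X (m + 1) = w + 1 ↔ W k w ≤ q X m) := by
    intro k w m hm
    have hw : X m = w := hm.1
    have hcard : ((Finset.range (m + 1)).filter fun s => X s = X m).card = k := by
      have h1 : ((Finset.range (m + 1)).filter fun s => X s = X m).card = cnt X w (m + 1) := by
        unfold cnt; rw [hw]
      rw [h1, cnt_succ, if_pos hw]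
      exact hm.2
    rw [hX m, hcard, hw]
    split_ifs with h
    · simp [h]
    · constructor
      · intro h1; omega
      · intro h1; exact absurd h1 h
  have hstep' : ∀ k (w : ℤ) m, IsNthVisit X' k w m → (X' (m + 1) = w + 1 ↔ W k w ≤ q' X' m) := by
    intro k w m hm
    have hw : X' m = w := hm.1
    have hcard : ((Finset.range (m + 1)).filter fun s => X' s = X' m).card = k := by
      have h1 : ((Finset.range (m + 1)).filter fun s => X' s = X' m).card = cnt X' w (m + 1) := by
        unfold cnt; rw [hw]
      rw [h1, cnt_succ, if_pos hw]
      exact hm.2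
    rw [hX' m, hcard, hw]
    split_ifs with h
    · simp [h]
    · constructor
      · intro h1; omega
      · intro h1; exact absurd h1 h
  -- main induction on total elapsed time
  have main : ∀ t : ℕ, ∀ (i : ℕ) (j : ℤ) (n n' : ℕ), n + n' ≤ t →
      IsNthVisit X i j n → IsNthVisit X' i j n' →
      Zp X n (j + 1) ≤ Zp X' n' (j + 1) ∧ Zp X' n' (j - 1) ≤ Zp X n (j - 1) := by
    intro t
    induction t using Nat.strong_induction_on with
    | _ t IH =>
      intro i j n n' hsum hn hn'
      -- dominance transfer for strictly earlier visits
      have dom : ∀ k (w : ℤ) m m', IsNthVisit X k w m → m < n → IsNthVisit X' k w m' →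
          m' < n' → X (m + 1) = w + 1 → X' (m' + 1) = w + 1 := by
        intro k w m m' hm hmn hm' hm'n hs
        have hE : Econd X X' k w := by
          intro a a' ha ha'
          have e1 : a = m := nth_unique ha hm
          have e2 : a' = m' := nth_unique ha' hm'
          subst e1; subst e2
          exact IH (a + a') (by omega) k w a a' (le_refl _) ha ha'
        have hq := hmono X X' k w m m' hE hm hm'
        have h1 := (hstep k w m hm).1 hs
        exact (hstep' k w m' hm').2 (le_trans h1 hq)
      constructor
      · -- right comparison at j+1 via core
        have hcore := core hXnn hX'nn (hX0.trans hX'0.symm) hn hn' dom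
        rw [Zp_eq hn.1 (by omega), Zp_eq hn'.1 (by omega)]
        omega
      · -- left comparison at j-1 via core applied to the negated paths
        have hNnn : ∀ m, (fun t => -(X' t)) (m + 1) = (fun t => -(X' t)) m + 1 ∨
            (fun t => -(X' t)) (m + 1) = (fun t => -(X' t)) m - 1 := by
          intro m; rcases hX'nn m with h | h
          · right; show -(X' (m+1)) = -(X' m) - 1; omega
          · left; show -(X' (m+1)) = -(X' m) + 1; omega
        have hNnn' : ∀ m, (fun t => -(X t)) (m + 1) = (fun t => -(X t)) m + 1 ∨
            (fun t => -(X t)) (m + 1) = (fun t => -(X t)) m - 1 := by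
          intro m; rcases hXnn m with h | h
          · right; show -(X (m+1)) = -(X m) - 1; omega
          · left; show -(X (m+1)) = -(X m) + 1; omega
        have hdomN : ∀ k (w : ℤ) m m', IsNthVisit (fun t => -(X' t)) k w m → m < n' →
            IsNthVisit (fun t => -(X t)) k w m' → m' < n →
            (fun t => -(X' t)) (m + 1) = w + 1 → (fun t => -(X t)) (m' + 1) = w + 1 := by
          intro k w m m' hm hmn hm' hm'n hs
          have hm2 : IsNthVisit X' k (-w) m := isNth_neg.1 hm
          have hm'2 : IsNthVisit X k (-w) m' := isNth_neg.1 hm'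
          have hs2 : -(X' (m + 1)) = w + 1 := hs
          -- X' steps left from -w, so X also steps left
          have hXleft : X (m' + 1) = -w - 1 := by
            rcases hXnn m' with h | h
            · exfalso
              have hXr : X (m' + 1) = -w + 1 := by rw [hm'2.1] at h; omega
              have := dom k (-w) m' m hm'2 hm'n hm2 hmn hXr
              omega
            · rw [hm'2.1] at h; omega
          show -(X (m' + 1)) = w + 1
          omega
        have hcore := core hNnn hNnn'
          (show -(X' 0) = -(X 0) by rw [hX0, hX'0])
          (isNth_neg.2 (by rw [neg_neg]; exact hn'))
          (isNth_neg.2 (by rw [neg_neg]; exact hn)) hdomN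
        rw [cnt_neg, cnt_neg] at hcore
        rw [show -(-j + 1) = j - 1 by ring] at hcore
        rw [Zp_eq hn.1 (by omega), Zp_eq hn'.1 (by omega)]
        omega
  intro i j n n' hn hn'
  exact main (n + n') i j n n' (le_refl _) hn hn'
end
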